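/- arXiv:1703.01970 — 6 statements merged into one kernel-verified Lean document; each statement's English description precedes it below -/
import Mathlib

section
/- If a randomized algorithm M mapping inputs to real-valued outputs satisfies ε-differential privacy (i.e., for all neighboring inputs S, S' and all measurable sets T, Pr[M(S) ∈ T] ≤ e^ε · Pr[M(S') ∈ T] and vice versa), then for every pair of neighboring inputs S, S' and every measurable function h from the output space to ℝ, E_{y←M(S)}[h(y)] ≤ e^{−ε}·E_{y←M(S')}[h(y)] + (e^ε − e^{−ε})·E_{y←M(S')}[|h(y)|]. -/
open MeasureTheory Real

lemma aux_dp {Y : Type*} [MeasurableSpace Y] (μ ν : Measure Y) (c : ℝ) (hc : 0 < c)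
    (hle : ∀ T : Set Y, MeasurableSet T → μ T ≤ ENNReal.ofReal c * ν T)
    (f : Y → ℝ) (hf : Measurable f) (hf0 : ∀ y, 0 ≤ f y) (hfi : Integrable f ν) :
    ∫ y, f y ∂μ ≤ c * ∫ y, f y ∂ν := by
  have hmle : μ ≤ (ENNReal.ofReal c) • ν := by
    refine Measure.le_iff.mpr fun s hs => ?_
    simpa using hle s hs
  have hlin : ∫⁻ y, ENNReal.ofReal (f y) ∂μ ≤ ENNReal.ofReal c * ∫⁻ y, ENNReal.ofReal (f y) ∂ν := by
    calc ∫⁻ y, ENNReal.ofReal (f y) ∂μ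
        ≤ ∫⁻ y, ENNReal.ofReal (f y) ∂((ENNReal.ofReal c) • ν) := lintegral_mono' hmle le_rfl
      _ = ENNReal.ofReal c * ∫⁻ y, ENNReal.ofReal (f y) ∂ν := lintegral_smul_measure _ _
  have hfin : ∫⁻ y, ENNReal.ofReal (f y) ∂ν < ⊤ := by
    have := hfi.hasFiniteIntegral
    rw [hasFiniteIntegral_iff_ofReal (Filter.Eventually.of_forall hf0)] at this
    exact this
  have h1 : ∫ y, f y ∂μ = (∫⁻ y, ENNReal.ofReal (f y) ∂μ).toReal :=
    integral_eq_lintegral_of_nonneg_ae (Filter.Eventually.of_forall hf0) hf.aestronglyMeasurable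
  have h2 : ∫ y, f y ∂ν = (∫⁻ y, ENNReal.ofReal (f y) ∂ν).toReal :=
    integral_eq_lintegral_of_nonneg_ae (Filter.Eventually.of_forall hf0) hf.aestronglyMeasurable
  rw [h1, h2]
  calc (∫⁻ y, ENNReal.ofReal (f y) ∂μ).toReal
      ≤ (ENNReal.ofReal c * ∫⁻ y, ENNReal.ofReal (f y) ∂ν).toReal := by
        apply ENNReal.toReal_mono _ hlin
        exact ENNReal.mul_ne_top ENNReal.ofReal_ne_top hfin.ne
    _ = c * (∫⁻ y, ENNReal.ofReal (f y) ∂ν).toReal := by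
        rw [ENNReal.toReal_mul, ENNReal.toReal_ofReal hc.le]

theorem stmt_0 {X Y : Type*} [MeasurableSpace Y]
    (M : X → Measure Y) (hM : ∀ S, IsProbabilityMeasure (M S))
    (ε : ℝ) (hε : 0 ≤ ε)
    (Neighbor : X → X → Prop) (hsymm : ∀ S S', Neighbor S S' → Neighbor S' S)
    (hDP : ∀ S S', Neighbor S S' → ∀ T : Set Y, MeasurableSet T →
      M S T ≤ ENNReal.ofReal (exp ε) * M S' T)
    (S S' : X) (hN : Neighbor S S')
    (h : Y → ℝ) (hmeas : Measurable h)
    (hint : Integrable h (M S)) (hint' : Integrable h (M S')) :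
    ∫ y, h y ∂(M S) ≤ exp (-ε) * ∫ y, h y ∂(M S') +
      (exp ε - exp (-ε)) * ∫ y, |h y| ∂(M S') := by
  set p : Y → ℝ := fun y => max (h y) 0 with hp
  set q : Y → ℝ := fun y => max (-h y) 0 with hq
  have hpmeas : Measurable p := hmeas.max measurable_const
  have hqmeas : Measurable q := hmeas.neg.max measurable_const
  have hp0 : ∀ y, 0 ≤ p y := fun y => le_max_right _ _
  have hq0 : ∀ y, 0 ≤ q y := fun y => le_max_right _ _
  have hpint : Integrable p (M S) := hint.pos_part
  have hqint : Integrable q (M S) := hint.neg.pos_part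
  have hpint' : Integrable p (M S') := hint'.pos_part
  have hqint' : Integrable q (M S') := hint'.neg.pos_part
  have hsub : ∀ y, h y = p y - q y := fun y => by
    simp only [hp, hq]; rcases le_total (h y) 0 with hy | hy <;>
      [rw [max_eq_right hy, max_eq_left (by linarith)];
       rw [max_eq_left hy, max_eq_right (by linarith)] ] <;> ring
  have habs : ∀ y, |h y| = p y + q y := fun y => by
    simp only [hp, hq]; rcases le_total (h y) 0 with hy | hy <;>
      [rw [max_eq_right hy, max_eq_left (by linarith), abs_of_nonpos hy];
       rw [max_eq_left hy, max_eq_right (by linarith), abs_of_nonneg hy]] <;> ring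
  -- upper bound on ∫ p ∂(M S)
  have hub : ∫ y, p y ∂(M S) ≤ exp ε * ∫ y, p y ∂(M S') :=
    aux_dp (M S) (M S') (exp ε) (exp_pos ε) (hDP S S' hN) p hpmeas hp0 hpint'
  -- lower bound on ∫ q ∂(M S): from ∫ q ∂(M S') ≤ exp ε * ∫ q ∂(M S)
  have hlb' : ∫ y, q y ∂(M S') ≤ exp ε * ∫ y, q y ∂(M S) :=
    aux_dp (M S') (M S) (exp ε) (exp_pos ε) (hDP S' S (hsymm S S' hN)) q hqmeas hq0 hqint
  have hlb : exp (-ε) * ∫ y, q y ∂(M S') ≤ ∫ y, q y ∂(M S) := by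
    rw [exp_neg]
    rw [inv_mul_le_iff₀ (exp_pos ε)]
    linarith [hlb']
  have hq'nonneg : 0 ≤ ∫ y, q y ∂(M S') := integral_nonneg hq0
  have hIS : ∫ y, h y ∂(M S) = ∫ y, p y ∂(M S) - ∫ y, q y ∂(M S) := by
    rw [← integral_sub hpint hqint]
    exact integral_congr_ae (Filter.Eventually.of_forall fun y => hsub y)
  have hIS' : ∫ y, h y ∂(M S') = ∫ y, p y ∂(M S') - ∫ y, q y ∂(M S') := by
    rw [← integral_sub hpint' hqint']
    exact integral_congr_ae (Filter.Eventually.of_forall fun y => hsub y)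
  have hIA' : ∫ y, |h y| ∂(M S') = ∫ y, p y ∂(M S') + ∫ y, q y ∂(M S') := by
    rw [← integral_add hpint' hqint']
    exact integral_congr_ae (Filter.Eventually.of_forall fun y => habs y)
  have hee : exp (-ε) ≤ exp ε := exp_le_exp.mpr (by linarith)
  rw [hIS, hIS', hIA']
  nlinarith [hub, hlb, hq'nonneg]
end

section
/- Let H be a finite nonempty set, h : H → ℝ a function, and η > 0. Define a random variable Y on H by Pr[Y = y] = exp(η·h(y))/C where C = Σ_{y∈H} exp(η·h(y)). Then E[h(Y)] ≥ max_{y∈H} h(y) − (1/η)·ln|H|. -/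
/-!
For the Gibbs distribution `p = softmax g` of a potential `g = η h`, taking logarithms of
`p i = exp (g i) / ∑ j, exp (g j)` gives the exact identity
`𝔼_p[g] = log (∑ j, exp (g j)) - Ent(p)`, where `Ent(p) = ∑ i, -p i log (p i)`.
The log-partition function dominates every single term `g i`, and by Jensen's inequality for the
concave `x ↦ -x log x` the entropy is at most `log |H|`. Dividing by `η` gives the bound.
-/

open Finset Real

theorem sum_negMulLog_le_log_card {ι : Type*} [Fintype ι] [Nonempty ι] {p : ι → ℝ}
    (hp : ∀ i, 0 ≤ p i) (hsum : ∑ i, p i = 1) :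
    ∑ i, negMulLog (p i) ≤ log (Fintype.card ι) := by
  set n : ℝ := (Fintype.card ι : ℝ)
  have hn : 0 < n := by positivity
  have jensen : ∑ i, n⁻¹ • negMulLog (p i) ≤ negMulLog (∑ i, n⁻¹ • p i) :=
    concaveOn_negMulLog.le_map_sum (fun _ _ => by positivity)
      (by simp [n, hn.ne']) (fun i _ => Set.mem_Ici.mpr (hp i))
  rw [← smul_sum, ← smul_sum, hsum, smul_eq_mul, smul_eq_mul, mul_one, negMulLog,
    log_inv, inv_mul_le_iff₀ hn] at jensen
  simpa [n, hn.ne'] using jensen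

noncomputable def softmax {ι : Type*} [Fintype ι] (g : ι → ℝ) (i : ι) : ℝ :=
  exp (g i) / ∑ j, exp (g j)

section Softmax

variable {ι : Type*} [Fintype ι] (g : ι → ℝ)

theorem le_log_sum_exp (i : ι) : g i ≤ log (∑ j, exp (g j)) := by
  rw [← log_exp (g i)]
  exact log_le_log (exp_pos _) (single_le_sum (fun j _ => (exp_pos (g j)).le) (mem_univ i))

variable [Nonempty ι]

theorem sum_exp_pos : 0 < ∑ j, exp (g j) :=
  sum_pos (fun j _ => exp_pos (g j)) univ_nonempty

theorem softmax_pos (i : ι) : 0 < softmax g i :=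
  div_pos (exp_pos _) (sum_exp_pos g)

theorem sum_softmax : ∑ i, softmax g i = 1 := by
  simp only [softmax, ← sum_div]
  exact div_self (sum_exp_pos g).ne'

theorem log_softmax (i : ι) : log (softmax g i) = g i - log (∑ j, exp (g j)) := by
  rw [softmax, log_div (exp_ne_zero _) (sum_exp_pos g).ne', log_exp]

theorem sum_softmax_mul_eq_log_sum_exp_sub_sum_negMulLog :
    ∑ i, softmax g i * g i = log (∑ j, exp (g j)) - ∑ i, negMulLog (softmax g i) := by
  have hterm : ∀ i, softmax g i * g i
      = softmax g i * log (∑ j, exp (g j)) - negMulLog (softmax g i) := fun i => by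
    rw [negMulLog, log_softmax]; ring
  rw [sum_congr rfl fun i _ => hterm i, sum_sub_distrib, ← sum_mul, sum_softmax, one_mul]

theorem sub_log_card_le_sum_softmax_mul (i : ι) :
    g i - log (Fintype.card ι) ≤ ∑ j, softmax g j * g j := by
  rw [sum_softmax_mul_eq_log_sum_exp_sub_sum_negMulLog]
  have := sum_negMulLog_le_log_card (fun i => (softmax_pos g i).le) (sum_softmax g)
  linarith [le_log_sum_exp g i]

end Softmax

theorem stmt_2 {H : Type*} [Fintype H] [Nonempty H] (h : H → ℝ) (η : ℝ) (hη : 0 < η) :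
    (∑ y, (Real.exp (η * h y) / ∑ y', Real.exp (η * h y')) * h y)
      ≥ (Finset.univ.sup' Finset.univ_nonempty h) - (1/η) * Real.log (Fintype.card H) := by
  rw [ge_iff_le, sub_le_iff_le_add]
  refine sup'_le _ _ fun y _ => sub_le_iff_le_add.mp ?_
  have key := sub_log_card_le_sum_softmax_mul (fun y => η * h y) y
  simp only [softmax, mul_left_comm _ η, ← mul_sum] at key
  calc h y - 1 / η * log (Fintype.card H) = (η * h y - log (Fintype.card H)) / η := by field_simp
    _ ≤ _ := by rw [div_le_iff₀ hη]; linarith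
end

section
/- The exponential mechanism is ε-differentially private: for a λ-sensitive quality function q : X^n × H → ℝ (meaning |q(S,h) − q(S',h)| ≤ λ for all h ∈ H and all neighboring S, S' differing in one entry), the mechanism that outputs h ∈ H with probability proportional to exp((ε/(2λ))·q(S,h)) satisfies: for all neighboring S, S' and every subset B ⊆ H, Pr[output on S ∈ B] ≤ e^ε · Pr[output on S' ∈ B]. -/
/-!
Sensitivity `λ` changes each unnormalised weight `exp (ε / (2λ) · q(S, h))` by a factor of at most
`exp (ε / 2)` in either direction; the mass of `B` and the normalising constant each contribute
one such factor to the ratio of output probabilities.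
-/

open Finset

theorem sum_div_sum_le_mul_sum_div_sum {ι : Type*} [Fintype ι] {f g : ι → ℝ} {a b : ℝ}
    (B : Finset ι) (ha : 0 ≤ a) (hg : ∀ i, 0 ≤ g i) (hf_sum : 0 < ∑ i, f i)
    (hg_sum : 0 < ∑ i, g i) (hfg : ∀ i ∈ B, f i ≤ a * g i) (hgf : ∀ i, g i ≤ b * f i) :
    (∑ i ∈ B, f i) / (∑ i, f i) ≤ a * b * ((∑ i ∈ B, g i) / (∑ i, g i)) := by
  have hB : ∑ i ∈ B, f i ≤ a * ∑ i ∈ B, g i := by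
    rw [mul_sum]; exact sum_le_sum hfg
  have huniv : ∑ i, g i ≤ b * ∑ i, f i := by
    rw [mul_sum]; exact sum_le_sum fun i _ => hgf i
  have hgB : 0 ≤ a * ∑ i ∈ B, g i := mul_nonneg ha (sum_nonneg fun i _ => hg i)
  rw [div_le_iff₀ hf_sum, mul_div_assoc', div_mul_eq_mul_div, le_div_iff₀ hg_sum]
  calc (∑ i ∈ B, f i) * ∑ i, g i
      ≤ (a * ∑ i ∈ B, g i) * (b * ∑ i, f i) := mul_le_mul hB huniv hg_sum.le hgB
    _ = a * b * (∑ i ∈ B, g i) * ∑ i, f i := by ring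

theorem Real.exp_mul_le_exp_mul_mul_exp_mul {c x y d : ℝ} (hc : 0 ≤ c) (hxy : x - y ≤ d) :
    Real.exp (c * x) ≤ Real.exp (c * d) * Real.exp (c * y) := by
  rw [← Real.exp_add, Real.exp_le_exp]
  nlinarith

theorem stmt_3 {X : Type*} {n : ℕ} {H : Type*} [Fintype H] [Nonempty H]
    (q : (Fin n → X) → H → ℝ) (ε lam : ℝ) (hε : 0 < ε) (hlam : 0 < lam)
    (hsens : ∀ S S' : Fin n → X, (∃ i, ∀ j ≠ i, S j = S' j) → ∀ h : H, |q S h - q S' h| ≤ lam)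
    (S S' : Fin n → X) (hnb : ∃ i, S i ≠ S' i ∧ ∀ j ≠ i, S j = S' j) (B : Finset H) :
    (∑ h ∈ B, Real.exp (ε / (2 * lam) * q S h)) / (∑ h, Real.exp (ε / (2 * lam) * q S h))
      ≤ Real.exp ε *
        ((∑ h ∈ B, Real.exp (ε / (2 * lam) * q S' h)) /
          (∑ h, Real.exp (ε / (2 * lam) * q S' h))) := by
  obtain ⟨i, -, hagree⟩ := hnb
  have hq := hsens S S' ⟨i, hagree⟩
  set c := ε / (2 * lam)
  have hc : 0 ≤ c := by positivity
  have hc_lam : c * lam = ε / 2 := by simp only [c]; field_simp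
  have hsum_pos (T : Fin n → X) : 0 < ∑ h, Real.exp (c * q T h) :=
    sum_pos (fun h _ => Real.exp_pos _) univ_nonempty
  have hexp : Real.exp ε = Real.exp (c * lam) * Real.exp (c * lam) := by
    rw [← Real.exp_add, hc_lam, add_halves]
  rw [hexp]
  refine sum_div_sum_le_mul_sum_div_sum B (Real.exp_pos _).le (fun h => (Real.exp_pos _).le)
    (hsum_pos S) (hsum_pos S') (fun h _ => ?_) (fun h => ?_)
  · exact Real.exp_mul_le_exp_mul_mul_exp_mul hc (abs_le.mp (hq h)).2
  · exact Real.exp_mul_le_exp_mul_mul_exp_mul hc (by linarith [(abs_le.mp (hq h)).1])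
end

section
/- For the exponential mechanism with finite solution set H, λ-sensitive quality function q, and privacy parameter ε > 0 applied to database S, letting Opt(S) = max_{h∈H} q(S,h), the probability that the output h satisfies q(S,h) ≤ Opt(S) − Δ is at most |H| · exp(−εΔ/(2λ)), for any Δ > 0. -/
theorem stmt_4 {X : Type*} {n : ℕ} {H : Type*} [Fintype H] [Nonempty H]
    (q : (Fin n → X) → H → ℝ) (ε lam Δ : ℝ) (hε : 0 < ε) (hlam : 0 < lam) (hΔ : 0 < Δ)
    (S : Fin n → X) :
    (∑ h ∈ Finset.univ.filter
        (fun h => q S h ≤ (Finset.univ.sup' Finset.univ_nonempty (q S)) - Δ),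
        Real.exp (ε / (2 * lam) * q S h)) / (∑ h, Real.exp (ε / (2 * lam) * q S h))
      ≤ (Fintype.card H) * Real.exp (-(ε * Δ) / (2 * lam)) := by
  set c := ε / (2 * lam) with hc
  have hcpos : 0 < c := div_pos hε (by linarith)
  set Opt := Finset.univ.sup' Finset.univ_nonempty (q S) with hOpt
  obtain ⟨h₀, -, hh₀⟩ := Finset.exists_mem_eq_sup' (Finset.univ_nonempty (α := H)) (q S)
  have hden : Real.exp (c * Opt) ≤ ∑ h, Real.exp (c * q S h) := by
    rw [hOpt, hh₀]
    exact Finset.single_le_sum (f := fun h => Real.exp (c * q S h))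
      (fun h _ => (Real.exp_pos _).le) (Finset.mem_univ h₀)
  have hnum : (∑ h ∈ Finset.univ.filter (fun h => q S h ≤ Opt - Δ),
      Real.exp (c * q S h)) ≤ (Fintype.card H) * Real.exp (c * (Opt - Δ)) := by
    calc (∑ h ∈ Finset.univ.filter (fun h => q S h ≤ Opt - Δ), Real.exp (c * q S h))
        ≤ ∑ _h ∈ Finset.univ.filter (fun h => q S h ≤ Opt - Δ),
            Real.exp (c * (Opt - Δ)) := by
          refine Finset.sum_le_sum fun h hh => ?_
          have := (Finset.mem_filter.mp hh).2
          exact Real.exp_le_exp.mpr (by nlinarith)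
      _ = ((Finset.univ.filter (fun h => q S h ≤ Opt - Δ)).card : ℝ)
            * Real.exp (c * (Opt - Δ)) := by rw [Finset.sum_const, nsmul_eq_mul]
      _ ≤ (Fintype.card H) * Real.exp (c * (Opt - Δ)) := by
          gcongr
          · exact_mod_cast Finset.card_filter_le _ _
  calc (∑ h ∈ Finset.univ.filter (fun h => q S h ≤ Opt - Δ), Real.exp (c * q S h))
        / (∑ h, Real.exp (c * q S h))
      ≤ ((Fintype.card H) * Real.exp (c * (Opt - Δ))) / Real.exp (c * Opt) := by
        apply div_le_div₀ (by positivity) hnum (Real.exp_pos _) hden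
    _ = (Fintype.card H) * Real.exp (-(ε * Δ) / (2 * lam)) := by
        rw [mul_div_assoc, ← Real.exp_sub]
        congr 1
        rw [hc]
        ring
end

section
/- Fix constants c > b > 0. For every N ≥ max{2^{1/b}, 2^{8/(c−b)}}, the binary Kullback–Leibler divergence satisfies D(N^{−b} ‖ N^{−c}) ≥ ((c−b)/2) · N^{−b} · log₂ N, where D(a‖p) = a·log₂(a/p) + (1−a)·log₂((1−a)/(1−p)). -/
/-! The first term of `D(N^{-b} ‖ N^{-c})` is exactly `(c - b) N^{-b} log₂ N`. The second term is
bounded below through `log t ≥ 1 - 1/t`, which gives `x log (x / y) ≥ x - y`; with `x = 1 - N^{-b}`,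
`y = 1 - N^{-c}` it is at least `-N^{-b} / log 2 ≥ -2 N^{-b}`. Since `(c - b) log₂ N ≥ 8`, this loss
is absorbed by half of the first term. -/

open Real

lemma sub_le_mul_log_div {x y : ℝ} (hx : 0 < x) (hy : 0 < y) : x - y ≤ x * log (x / y) := by
  have h := one_sub_inv_le_log_of_pos (div_pos hx hy)
  rw [inv_div] at h
  calc x - y = x * (1 - y / x) := by field_simp
    _ ≤ x * log (x / y) := mul_le_mul_of_nonneg_left h hx.le

lemma sub_div_log_le_mul_logb_div {B x y : ℝ} (hB : 1 < B) (hx : 0 < x) (hy : 0 < y) :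
    (x - y) / log B ≤ x * logb B (x / y) := by
  rw [logb, mul_div_assoc']
  exact div_le_div_of_nonneg_right (sub_le_mul_log_div hx hy) (log_pos hB).le

theorem stmt_5 (b c : ℝ) (hb : 0 < b) (hbc : b < c) (N : ℝ)
    (hN : N ≥ max ((2:ℝ) ^ (1/b)) ((2:ℝ) ^ (8/(c-b)))) :
    N ^ (-b) * Real.logb 2 (N ^ (-b) / N ^ (-c))
      + (1 - N ^ (-b)) * Real.logb 2 ((1 - N ^ (-b)) / (1 - N ^ (-c)))
      ≥ ((c - b)/2) * N ^ (-b) * Real.logb 2 N := by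
  have hcb : 0 < c - b := sub_pos.2 hbc
  have hN8 : (2:ℝ) ^ (8/(c-b)) ≤ N := (le_max_right _ _).trans hN
  have hN1 : 1 < N := (one_lt_rpow one_lt_two (by positivity)).trans_le hN8
  have hN0 : 0 < N := one_pos.trans hN1
  have hL : 8 ≤ (c - b) * logb 2 N := by
    rw [← div_le_iff₀' hcb]
    exact (le_logb_iff_rpow_le one_lt_two hN0).2 hN8
  have hfirst : logb 2 (N ^ (-b) / N ^ (-c)) = (c - b) * logb 2 N := by
    rw [← rpow_sub hN0, logb_rpow_eq_mul_logb_of_pos hN0]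
    ring_nf
  set a := N ^ (-b)
  set p := N ^ (-c)
  have ha : 0 < a := rpow_pos_of_pos hN0 _
  have hp : 0 < p := rpow_pos_of_pos hN0 _
  have ha1 : a < 1 := rpow_lt_one_of_one_lt_of_neg hN1 (by linarith)
  have hp1 : p < 1 := rpow_lt_one_of_one_lt_of_neg hN1 (by linarith)
  have hsecond : -(2 * a) ≤ (1 - a) * logb 2 ((1 - a) / (1 - p)) := by
    refine le_trans ?_ (sub_div_log_le_mul_logb_div one_lt_two (by linarith) (by linarith))
    rw [le_div_iff₀ (log_pos one_lt_two)]
    nlinarith [log_two_gt_d9]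
  rw [hfirst]
  nlinarith
end

section
/- (Tightness of Chernoff bound, lower-tail version.) Let 0 < p, δ ≤ 1/2 and n ≥ 3/(δ²p). Let X_1,…,X_n be i.i.d. Bernoulli(p). Then Pr[Σ_i X_i ≤ (1−δ)pn] ≥ exp(−9δ²pn) and Pr[Σ_i X_i ≥ (1+δ)pn] ≥ exp(−9δ²pn). -/
/-!
Change of measure. Let `μ_r` be the law of `n` independent Bernoulli(`r`) trials. Tilt to a mean
`r` beyond the threshold, e.g. `r = (1 - 2δ)p` for the lower tail, and take a window
`|k - rn| ≤ ρn` of success counts inside the tail event. By Chebyshev the window has `μ_r`-mass at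
least a constant, since `ρ²n ≳ r` once `δ²pn ≥ 3`; on it, `dμ_p/dμ_r = exp (n ℓ(k/n))` with `ℓ`
affine, and Taylor bounds on `log` at the far end of the window give `ℓ ≥ -(9 - s)δ²p`. The spare
factor `exp (-sδ²pn) ≤ exp (-3s)` pays for the Chebyshev constant.
-/

open Real Finset MeasureTheory

theorem log_one_add_le {x : ℝ} (hx : 0 ≤ x) : log (1 + x) ≤ x - x ^ 2 / 2 + x ^ 3 / 3 := by
  let g (y : ℝ) : ℝ := y - y ^ 2 / 2 + y ^ 3 / 3 - log (1 + y)
  have hg : ∀ y ∈ Set.Icc 0 x, HasDerivAt g (y ^ 3 / (1 + y)) y := by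
    intro y hy
    have hy1 : 1 + y ≠ 0 := by linarith [hy.1]
    refine ((((hasDerivAt_id' y).fun_sub ((hasDerivAt_pow 2 y).div_const 2)).fun_add
      ((hasDerivAt_pow 3 y).div_const 3)).fun_sub
        (((hasDerivAt_id' y).const_add 1).log hy1)).congr_deriv ?_
    field_simp
    ring
  suffices MonotoneOn g (Set.Icc 0 x) by
    simpa [g] using this ⟨le_rfl, hx⟩ ⟨hx, le_rfl⟩ hx
  refine monotoneOn_of_hasDerivWithinAt_nonneg (convex_Icc 0 x)
    (fun y hy ↦ (hg y hy).continuousAt.continuousWithinAt)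
    (fun y hy ↦ (hg y (interior_subset hy)).hasDerivWithinAt) fun y hy ↦ ?_
  rw [interior_Icc] at hy
  have := hy.1.le
  positivity

theorem add_sq_div_two_le_neg_log_one_sub {x : ℝ} (hx : 0 ≤ x) (hx1 : x < 1) :
    x + x ^ 2 / 2 ≤ -log (1 - x) := by
  let g (y : ℝ) : ℝ := -log (1 - y) - y - y ^ 2 / 2
  have hg : ∀ y ∈ Set.Icc 0 x, HasDerivAt g (y ^ 2 / (1 - y)) y := by
    intro y hy
    have hy1 : 1 - y ≠ 0 := by linarith [hy.2]
    refine (((((hasDerivAt_id' y).const_sub 1).log hy1).fun_neg.fun_sub (hasDerivAt_id' y)).fun_sub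
      ((hasDerivAt_pow 2 y).div_const 2)).congr_deriv ?_
    field_simp
    ring
  suffices MonotoneOn g (Set.Icc 0 x) by
    have := this ⟨le_rfl, hx⟩ ⟨hx, le_rfl⟩ hx
    simp [g] at this
    linarith
  refine monotoneOn_of_hasDerivWithinAt_nonneg (convex_Icc 0 x)
    (fun y hy ↦ (hg y hy).continuousAt.continuousWithinAt)
    (fun y hy ↦ (hg y (interior_subset hy)).hasDerivWithinAt) fun y hy ↦ ?_
  rw [interior_Icc] at hy
  have : 0 < 1 - y := by linarith [hy.2]
  positivity

theorem exp_neg_half_le : exp (-(1 / 2)) ≤ 2 / 3 := by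
  rw [exp_neg, inv_le_comm₀ (exp_pos _) (by norm_num)]
  linarith [add_one_le_exp (1 / 2 : ℝ)]

theorem exp_neg_two_le : exp (-2) ≤ 1 / 6 := by
  rw [exp_neg, inv_le_comm₀ (exp_pos 2) (by norm_num), show (2 : ℝ) = 1 + 1 by norm_num, exp_add]
  nlinarith [exp_one_gt_d9]

theorem Finset.sum_sub_sum_mul_sq_div_le_sum_filter {α : Type*} [Fintype α] {w : α → ℝ}
    (hw : ∀ x, 0 ≤ w x) (f : α → ℝ) {t : ℝ} (ht : 0 < t) :
    ∑ x, w x - (∑ x, w x * f x ^ 2) / t ^ 2 ≤ ∑ x with |f x| ≤ t, w x := by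
  have hfar : ∑ x with ¬|f x| ≤ t, w x ≤ (∑ x, w x * f x ^ 2) / t ^ 2 := by
    rw [le_div_iff₀ (by positivity), sum_mul]
    calc ∑ x with ¬|f x| ≤ t, w x * t ^ 2
        ≤ ∑ x with ¬|f x| ≤ t, w x * f x ^ 2 := by
          refine sum_le_sum fun x hx ↦ mul_le_mul_of_nonneg_left ?_ (hw x)
          rw [← sq_abs (f x)]
          exact pow_le_pow_left₀ ht.le (not_le.1 (mem_filter.1 hx).2).le 2
      _ ≤ ∑ x, w x * f x ^ 2 :=
          sum_le_sum_of_subset_of_nonneg (filter_subset _ _) fun x _ _ ↦ by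
            have := hw x; positivity
  linarith [sum_filter_add_sum_filter_not univ (fun x ↦ |f x| ≤ t) w]

section Configurations

variable {n : ℕ}

noncomputable def configWeight (r : ℝ) (x : Fin n → Bool) : ℝ := ∏ i, if x i then r else 1 - r

def numTrue (x : Fin n → Bool) : ℝ := ∑ i, if x i then 1 else 0

theorem configWeight_nonneg {r : ℝ} (hr0 : 0 ≤ r) (hr1 : r ≤ 1) (x : Fin n → Bool) :
    0 ≤ configWeight r x :=
  prod_nonneg fun i _ ↦ by split_ifs <;> linarith

theorem sum_configWeight (r : ℝ) : ∑ x : Fin n → Bool, configWeight r x = 1 := by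
  unfold configWeight
  rw [← Fintype.prod_sum (fun (_ : Fin n) (b : Bool) ↦ if b then r else 1 - r)]
  simp

theorem sum_configWeight_mul_centered_mul_centered (r : ℝ) (i j : Fin n) :
    ∑ x : Fin n → Bool, configWeight r x * ((if x i then 1 else 0) - r) *
      ((if x j then 1 else 0) - r) = if i = j then r * (1 - r) else 0 := by
  let g (k : Fin n) (b : Bool) : ℝ := (if b then r else 1 - r) *
    (if k = i then (if b then 1 else 0) - r else 1) *
    (if k = j then (if b then 1 else 0) - r else 1)
  have hfactor (x : Fin n → Bool) : configWeight r x * ((if x i then 1 else 0) - r) *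
      ((if x j then 1 else 0) - r) = ∏ k, g k (x k) := by
    simp only [g, prod_mul_distrib, prod_ite_eq', mem_univ, if_true, configWeight]
  rw [sum_congr rfl fun x _ ↦ hfactor x, ← Fintype.prod_sum g]
  by_cases hij : i = j
  · subst hij
    rw [if_pos rfl, ← prod_erase_mul _ _ (mem_univ i),
      prod_eq_one fun k hk ↦ by simp [g, ne_of_mem_erase hk]]
    simp [g]
    ring
  · rw [if_neg hij]
    exact prod_eq_zero (mem_univ i) (by simp [g, hij]; ring)

theorem sum_configWeight_mul_sq (r : ℝ) :
    ∑ x : Fin n → Bool, configWeight r x * (numTrue x - r * n) ^ 2 = n * (r * (1 - r)) := by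
  have hcentered (x : Fin n → Bool) :
      numTrue x - r * n = ∑ i, ((if x i then 1 else 0) - r) := by
    simp [numTrue, sum_sub_distrib, mul_comm]
  simp_rw [hcentered, sq, sum_mul_sum, mul_sum, ← mul_assoc]
  rw [sum_comm]
  simp_rw [sum_comm (s := univ (α := Fin n → Bool)), sum_configWeight_mul_centered_mul_centered]
  simp [mul_assoc]

noncomputable def bernoulliBool (p : ℝ) : Measure Bool :=
  ENNReal.ofReal p • Measure.dirac true + ENNReal.ofReal (1 - p) • Measure.dirac false

instance (p : ℝ) : IsFiniteMeasure (bernoulliBool p) :=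
  ⟨by simp [bernoulliBool, ENNReal.add_lt_top]⟩

noncomputable abbrev bernoulliPi (n : ℕ) (p : ℝ) : Measure (Fin n → Bool) :=
  Measure.pi fun _ ↦ bernoulliBool p

theorem bernoulliBool_singleton (p : ℝ) (b : Bool) :
    bernoulliBool p {b} = ENNReal.ofReal (if b then p else 1 - p) := by
  cases b <;> simp [bernoulliBool]

open scoped Classical in
theorem toReal_bernoulliPi {p : ℝ} (hp0 : 0 ≤ p) (hp1 : p ≤ 1) (A : Set (Fin n → Bool)) :
    (bernoulliPi n p A).toReal = ∑ x with x ∈ A, configWeight p x := by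
  have hA : A = ↑({x | x ∈ A} : Finset (Fin n → Bool)) := by ext; simp
  have hnonneg : ∀ x : Fin n → Bool, ∀ i, 0 ≤ if x i then p else 1 - p := fun x i ↦ by
    split_ifs <;> linarith
  rw [hA, ← sum_measure_singleton, ENNReal.toReal_sum fun _ _ ↦ measure_ne_top _ _]
  refine sum_congr (by simp) fun x _ ↦ ?_
  simp_rw [Measure.pi_singleton, bernoulliBool_singleton,
    ← ENNReal.ofReal_prod_of_nonneg fun i _ ↦ hnonneg x i]
  exact ENNReal.toReal_ofReal (prod_nonneg fun i _ ↦ hnonneg x i)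

noncomputable def logLikelihoodRatio (p r θ : ℝ) : ℝ :=
  θ * log (p / r) + (1 - θ) * log ((1 - p) / (1 - r))

theorem configWeight_eq_mul_exp {p r : ℝ} (hp0 : 0 < p) (hp1 : p < 1) (hr0 : 0 < r)
    (hr1 : r < 1) (hn : n ≠ 0) (x : Fin n → Bool) :
    configWeight p x = configWeight r x * exp (n * logLikelihoodRatio p r (numTrue x / n)) := by
  have hsplit : ∀ i, (if x i then log (p / r) else log ((1 - p) / (1 - r))) =
      log ((1 - p) / (1 - r)) + (if x i then 1 else 0) * (log (p / r) - log ((1 - p) / (1 - r))) :=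
    fun i ↦ by split_ifs <;> ring
  have hlog : n * logLikelihoodRatio p r (numTrue x / n) =
      ∑ i, if x i then log (p / r) else log ((1 - p) / (1 - r)) := by
    simp only [hsplit, sum_add_distrib, ← sum_mul, sum_const, card_univ, Fintype.card_fin,
      nsmul_eq_mul, logLikelihoodRatio, numTrue]
    field_simp
    ring
  rw [hlog, exp_sum, configWeight, configWeight, ← prod_mul_distrib]
  refine prod_congr rfl fun i _ ↦ ?_
  have : 0 < 1 - r := by linarith
  have : 0 < 1 - p := by linarith
  split_ifs
  · rw [exp_log (by positivity)]; field_simp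
  · rw [exp_log (by positivity)]; field_simp

theorem logLikelihoodRatio_monotone {p r : ℝ} (hr0 : 0 < r) (hr1 : r < 1) (hp1 : p < 1)
    (hrp : r ≤ p) : Monotone (logLikelihoodRatio p r) := by
  have hα : 0 ≤ log (p / r) := log_nonneg ((one_le_div hr0).2 hrp)
  have hβ : log ((1 - p) / (1 - r)) ≤ 0 :=
    log_nonpos (div_nonneg (by linarith) (by linarith)) ((div_le_one (by linarith)).2 (by linarith))
  intro θ θ' h
  simp only [logLikelihoodRatio]
  nlinarith

theorem logLikelihoodRatio_antitone {p r : ℝ} (hp0 : 0 < p) (hr1 : r < 1) (hpr : p ≤ r) :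
    Antitone (logLikelihoodRatio p r) := by
  have hα : log (p / r) ≤ 0 :=
    log_nonpos (div_nonneg hp0.le (by linarith)) ((div_le_one (by linarith)).2 hpr)
  have hβ : 0 ≤ log ((1 - p) / (1 - r)) := log_nonneg ((one_le_div (by linarith)).2 (by linarith))
  intro θ θ' h
  simp only [logLikelihoodRatio]
  nlinarith

theorem logLikelihoodRatio_one_sub_mul_ge {p u θ : ℝ} (hp0 : 0 < p) (hp1 : p < 1) (hu0 : 0 ≤ u)
    (hu1 : u < 1) (hθ0 : 0 ≤ θ) (hθ1 : θ ≤ 1) :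
    θ * (u + u ^ 2 / 2) - (1 - θ) * (u * p / (1 - p) - (u * p / (1 - p)) ^ 2 / 2 +
      (u * p / (1 - p)) ^ 3 / 3) ≤ logLikelihoodRatio p ((1 - u) * p) θ := by
  have hq : 0 < 1 - p := by linarith
  have hx : 0 ≤ u * p / (1 - p) := by positivity
  have hr : p / ((1 - u) * p) = (1 - u)⁻¹ := by field_simp
  have hs : (1 - p) / (1 - (1 - u) * p) = (1 + u * p / (1 - p))⁻¹ := by
    rw [show 1 + u * p / (1 - p) = (1 - (1 - u) * p) / (1 - p) by field_simp; ring, inv_div]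
  rw [logLikelihoodRatio, hr, hs, log_inv, log_inv]
  have h1 := mul_le_mul_of_nonneg_left (add_sq_div_two_le_neg_log_one_sub hu0 hu1) hθ0
  have h2 := mul_le_mul_of_nonneg_left (log_one_add_le hx) (sub_nonneg.2 hθ1)
  linarith

theorem logLikelihoodRatio_one_add_mul_ge {p u θ : ℝ} (hp0 : 0 < p) (hp1 : p < 1) (hu0 : 0 ≤ u)
    (hr1 : (1 + u) * p < 1) (hθ0 : 0 ≤ θ) (hθ1 : θ ≤ 1) :
    -(θ * (u - u ^ 2 / 2 + u ^ 3 / 3)) + (1 - θ) * (u * p / (1 - p) + (u * p / (1 - p)) ^ 2 / 2) ≤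
      logLikelihoodRatio p ((1 + u) * p) θ := by
  have hq : 0 < 1 - p := by linarith
  have hy0 : 0 ≤ u * p / (1 - p) := by positivity
  have hy1 : u * p / (1 - p) < 1 := by rw [div_lt_one hq]; linarith
  have hr : p / ((1 + u) * p) = (1 + u)⁻¹ := by field_simp
  have hs : (1 - p) / (1 - (1 + u) * p) = (1 - u * p / (1 - p))⁻¹ := by
    rw [show 1 - u * p / (1 - p) = (1 - (1 + u) * p) / (1 - p) by field_simp; ring, inv_div]
  rw [logLikelihoodRatio, hr, hs, log_inv, log_inv]
  have h1 := mul_le_mul_of_nonneg_left (log_one_add_le hu0) hθ0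
  have h2 := mul_le_mul_of_nonneg_left (add_sq_div_two_le_neg_log_one_sub hy0 hy1)
    (sub_nonneg.2 hθ1)
  linarith

open scoped Classical in
theorem exp_mul_le_toReal_bernoulliPi {p r ρ c : ℝ} (hp0 : 0 < p) (hp1 : p < 1)
    (hr0 : 0 < r) (hr1 : r < 1) (hρ : 0 < ρ) (hn : n ≠ 0) {A : Set (Fin n → Bool)}
    (hA : ∀ x, |numTrue x - r * n| ≤ ρ * n → x ∈ A)
    (hc : ∀ θ, |θ - r| ≤ ρ → c ≤ logLikelihoodRatio p r θ) :
    exp (c * n) * (1 - r * (1 - r) / (ρ ^ 2 * n)) ≤ (bernoulliPi n p A).toReal := by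
  have hn' : (0 : ℝ) < n := by positivity
  have hcheb := sum_sub_sum_mul_sq_div_le_sum_filter (configWeight_nonneg hr0.le hr1.le)
    (fun x : Fin n → Bool ↦ numTrue x - r * n) (mul_pos hρ hn')
  rw [sum_configWeight, sum_configWeight_mul_sq,
    show n * (r * (1 - r)) / (ρ * n) ^ 2 = r * (1 - r) / (ρ ^ 2 * n) by field_simp] at hcheb
  rw [toReal_bernoulliPi hp0.le hp1.le, mul_comm]
  calc (1 - r * (1 - r) / (ρ ^ 2 * n)) * exp (c * n)
      ≤ (∑ x with |numTrue x - r * n| ≤ ρ * n, configWeight r x) * exp (c * n) :=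
        mul_le_mul_of_nonneg_right hcheb (exp_pos _).le
    _ ≤ ∑ x with |numTrue x - r * n| ≤ ρ * n, configWeight p x := by
        rw [sum_mul]
        refine sum_le_sum fun x hx ↦ ?_
        have hθ : |numTrue x / n - r| ≤ ρ := by
          rw [show numTrue x / n - r = (numTrue x - r * n) / n by field_simp, abs_div,
            abs_of_pos hn', div_le_iff₀ hn']
          exact (mem_filter.1 hx).2
        rw [configWeight_eq_mul_exp hp0 hp1 hr0 hr1 hn, mul_comm (c : ℝ) n]
        exact mul_le_mul_of_nonneg_left (exp_le_exp.2 (mul_le_mul_of_nonneg_left (hc _ hθ) hn'.le))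
          (configWeight_nonneg hr0.le hr1.le x)
    _ ≤ ∑ x with x ∈ A, configWeight p x :=
        sum_le_sum_of_subset_of_nonneg (monotone_filter_right _ fun x _ hx ↦ hA x hx)
          fun x _ _ ↦ configWeight_nonneg hp0.le hp1.le x

theorem exp_le_toReal_bernoulliPi_of_window {p r ρ δ s : ℝ} (hp0 : 0 < p) (hp1 : p < 1)
    (hr0 : 0 < r) (hr1 : r < 1) (hρ : 0 < ρ) (hs : 0 ≤ s) (hn : 3 ≤ δ ^ 2 * p * n)
    {A : Set (Fin n → Bool)}
    (hA : ∀ x, |numTrue x - r * n| ≤ ρ * n → x ∈ A)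
    (hrate : ∀ θ, |θ - r| ≤ ρ → -(9 - s) * δ ^ 2 * p ≤ logLikelihoodRatio p r θ)
    (hcheb : r * (1 - r) * (δ ^ 2 * p) / (3 * ρ ^ 2) + exp (-3 * s) ≤ 1) :
    exp (-9 * δ ^ 2 * p * n) ≤ (bernoulliPi n p A).toReal := by
  have hn0 : n ≠ 0 := by rintro rfl; norm_num at hn
  have hn' : (0 : ℝ) < n := by positivity
  refine le_trans ?_ (exp_mul_le_toReal_bernoulliPi hp0 hp1 hr0 hr1 hρ hn0 hA hrate)
  have hratio : r * (1 - r) / (ρ ^ 2 * n) ≤ r * (1 - r) * (δ ^ 2 * p) / (3 * ρ ^ 2) := by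
    rw [div_le_div_iff₀ (by positivity) (by positivity)]
    have : 0 ≤ r * (1 - r) * ρ ^ 2 := mul_nonneg (mul_nonneg hr0.le (by linarith)) (sq_nonneg ρ)
    nlinarith
  have hdecay : exp (-(s * (δ ^ 2 * p * n))) ≤ exp (-3 * s) := exp_le_exp.2 (by nlinarith)
  calc exp (-9 * δ ^ 2 * p * n)
      = exp (-(9 - s) * δ ^ 2 * p * n) * exp (-(s * (δ ^ 2 * p * n))) := by
        rw [← exp_add]; ring_nf
    _ ≤ exp (-(9 - s) * δ ^ 2 * p * n) * (1 - r * (1 - r) / (ρ ^ 2 * n)) :=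
        mul_le_mul_of_nonneg_left (by linarith) (exp_pos _).le

theorem lowerTail_exp_le_of_window {p δ r ρ θ₀ s : ℝ} (hp0 : 0 < p) (hp1 : p < 1)
    (hr0 : 0 < r) (hrp : r ≤ p) (hρ : 0 < ρ) (hs : 0 ≤ s) (hn : 3 ≤ δ ^ 2 * p * n)
    (hwin : r + ρ ≤ (1 - δ) * p) (hθ₀ : θ₀ ≤ r - ρ)
    (hrate : -(9 - s) * δ ^ 2 * p ≤ logLikelihoodRatio p r θ₀)
    (hcheb : r * (1 - r) * (δ ^ 2 * p) / (3 * ρ ^ 2) + exp (-3 * s) ≤ 1) :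
    exp (-9 * δ ^ 2 * p * n) ≤
      (bernoulliPi n p {x | numTrue x ≤ (1 - δ) * p * n}).toReal := by
  refine exp_le_toReal_bernoulliPi_of_window hp0 hp1 hr0 (by linarith) hρ hs hn (fun x hx ↦ ?_)
    (fun θ hθ ↦ ?_) hcheb
  · have := (abs_le.1 hx).2
    show numTrue x ≤ (1 - δ) * p * n
    nlinarith [Nat.cast_nonneg (α := ℝ) n]
  · exact hrate.trans
      (logLikelihoodRatio_monotone hr0 (by linarith) hp1 hrp (by linarith [(abs_le.1 hθ).1]))

theorem upperTail_exp_le_of_window {p δ r ρ θ₀ s : ℝ} (hp0 : 0 < p) (hp1 : p < 1)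
    (hpr : p ≤ r) (hr1 : r < 1) (hρ : 0 < ρ) (hs : 0 ≤ s) (hn : 3 ≤ δ ^ 2 * p * n)
    (hwin : (1 + δ) * p ≤ r - ρ) (hθ₀ : r + ρ ≤ θ₀)
    (hrate : -(9 - s) * δ ^ 2 * p ≤ logLikelihoodRatio p r θ₀)
    (hcheb : r * (1 - r) * (δ ^ 2 * p) / (3 * ρ ^ 2) + exp (-3 * s) ≤ 1) :
    exp (-9 * δ ^ 2 * p * n) ≤
      (bernoulliPi n p {x | numTrue x ≥ (1 + δ) * p * n}).toReal := by
  refine exp_le_toReal_bernoulliPi_of_window hp0 hp1 (by linarith) hr1 hρ hs hn (fun x hx ↦ ?_)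
    (fun θ hθ ↦ ?_) hcheb
  · have := (abs_le.1 hx).1
    show numTrue x ≥ (1 + δ) * p * n
    nlinarith [Nat.cast_nonneg (α := ℝ) n]
  · exact hrate.trans
      (logLikelihoodRatio_antitone hp0 hr1 hpr (by linarith [(abs_le.1 hθ).2]))

theorem lowerTail_poly_small {p δ x : ℝ} (hp0 : 0 < p) (hp : p ≤ 2 / 5) (hδ0 : 0 < δ)
    (hδ : δ ≤ 1 / 4) (hx : x * (1 - p) = 2 * δ * p) :
    -(53 / 6) * δ ^ 2 * p ≤ (1 - 3 * δ) * p * (2 * δ + 2 * δ ^ 2) -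
      (1 - (1 - 3 * δ) * p) * (x - x ^ 2 / 2 + x ^ 3 / 3) := by
  have hx0 : 0 ≤ x := by nlinarith
  have hxub : x ≤ 4 / 3 * δ := by nlinarith
  have hexpand : (1 - (1 - 3 * δ) * p) * (x - x ^ 2 / 2 + x ^ 3 / 3) =
      2 * δ * p + 2 * δ * p * x - 5 / 6 * δ * p * x ^ 2 + δ * p * x ^ 3 := by
    linear_combination (1 - x / 2 + x ^ 2 / 3) * hx
  rw [hexpand]
  have hdp : 0 ≤ δ * p := by positivity
  have t1 : 2 * δ * p * x ≤ 8 / 3 * δ ^ 2 * p := by nlinarith [mul_le_mul_of_nonneg_left hxub hdp]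
  have hx3 : x ^ 3 ≤ 64 / 27 * δ ^ 3 := by
    nlinarith [mul_nonneg (sub_nonneg.2 hxub)
      (by positivity : (0:ℝ) ≤ x ^ 2 + 4 / 3 * δ * x + 16 / 9 * δ ^ 2)]
  have hd4 : δ ^ 4 ≤ 1 / 16 * δ ^ 2 := by
    nlinarith [mul_le_mul_of_nonneg_right (by nlinarith : δ ^ 2 ≤ 1 / 16) (sq_nonneg δ)]
  have t2 : δ * p * x ^ 3 ≤ 4 / 27 * δ ^ 2 * p := by
    nlinarith [mul_le_mul_of_nonneg_left hx3 hdp, mul_le_mul_of_nonneg_right hd4 hp0.le]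
  have t3 : 6 * δ ^ 3 * p ≤ 3 / 2 * δ ^ 2 * p := by nlinarith
  nlinarith [mul_nonneg hdp (sq_nonneg x)]

theorem lowerTail_poly_large {p δ x : ℝ} (hp0 : 0 < p) (hp : p ≤ 1 / 2) (hδ0 : 0 < δ)
    (hδ : δ ≤ 1 / 2) (hx : x * (1 - p) = 3 / 2 * δ * p) :
    -(25 / 3) * δ ^ 2 * p ≤ (1 - 2 * δ) * p * (3 / 2 * δ + 9 / 8 * δ ^ 2) -
      (1 - (1 - 2 * δ) * p) * (x - x ^ 2 / 2 + x ^ 3 / 3) := by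
  have hx0 : 0 ≤ x := by nlinarith
  have hxub : x ≤ 3 / 2 * δ := by nlinarith
  have hexpand : (1 - (1 - 2 * δ) * p) * (x - x ^ 2 / 2 + x ^ 3 / 3) =
      3 / 2 * δ * p + 5 / 4 * δ * p * x - 1 / 2 * δ * p * x ^ 2 + 2 / 3 * δ * p * x ^ 3 := by
    linear_combination (1 - x / 2 + x ^ 2 / 3) * hx
  rw [hexpand]
  have hdp : 0 ≤ δ * p := by positivity
  have t1 : 5 / 4 * δ * p * x ≤ 15 / 8 * δ ^ 2 * p := by
    nlinarith [mul_le_mul_of_nonneg_left hxub hdp]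
  have hx3 : x ^ 3 ≤ 27 / 8 * δ ^ 3 := by
    nlinarith [mul_nonneg (sub_nonneg.2 hxub)
      (by positivity : (0:ℝ) ≤ x ^ 2 + 3 / 2 * δ * x + 9 / 4 * δ ^ 2)]
  have hd4 : δ ^ 4 ≤ 1 / 4 * δ ^ 2 := by
    nlinarith [mul_le_mul_of_nonneg_right (by nlinarith : δ ^ 2 ≤ 1 / 4) (sq_nonneg δ)]
  have t2 : 2 / 3 * δ * p * x ^ 3 ≤ 9 / 16 * δ ^ 2 * p := by
    nlinarith [mul_le_mul_of_nonneg_left hx3 hdp, mul_le_mul_of_nonneg_right hd4 hp0.le]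
  have t3 : 9 / 4 * δ ^ 3 * p ≤ 9 / 8 * δ ^ 2 * p := by nlinarith
  nlinarith [mul_nonneg hdp (sq_nonneg x)]

theorem upperTail_poly_small {p δ y : ℝ} (hp0 : 0 < p) (hp : p ≤ 2 / 5) (hδ0 : 0 < δ)
    (hδ : δ ≤ 1 / 2) (hy : y * (1 - p) = 2 * δ * p) :
    -(25 / 3) * δ ^ 2 * p ≤ -((1 + 3 * δ) * p * (2 * δ - 2 * δ ^ 2 + 8 / 3 * δ ^ 3)) +
      (1 - (1 + 3 * δ) * p) * (y + y ^ 2 / 2) := by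
  have hy0 : 0 ≤ y := by nlinarith
  have hyub : y ≤ 4 / 3 * δ := by nlinarith
  have hexpand : (1 - (1 + 3 * δ) * p) * (y + y ^ 2 / 2) =
      2 * δ * p - 2 * δ * p * y - 3 / 2 * δ * p * y ^ 2 := by
    linear_combination (1 + y / 2) * hy
  rw [hexpand]
  have hdp : 0 ≤ δ * p := by positivity
  have t1 : 2 * δ * p * y ≤ 8 / 3 * δ ^ 2 * p := by nlinarith [mul_le_mul_of_nonneg_left hyub hdp]
  have t2 : 3 / 2 * δ * p * y ^ 2 ≤ 8 / 3 * δ ^ 3 * p := by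
    nlinarith [mul_le_mul_of_nonneg_left (by nlinarith : y ^ 2 ≤ 16 / 9 * δ ^ 2) hdp]
  have hd3 : δ ^ 3 ≤ 1 / 2 * δ ^ 2 := by nlinarith
  have hd4 : δ ^ 4 ≤ 1 / 2 * δ ^ 3 := by nlinarith [mul_le_mul_of_nonneg_right hd3 hδ0.le]
  have t3 : 8 * δ ^ 4 * p ≤ 4 * δ ^ 3 * p := by nlinarith [mul_le_mul_of_nonneg_right hd4 hp0.le]
  have t4 : 20 / 3 * δ ^ 3 * p ≤ 10 / 3 * δ ^ 2 * p := by
    nlinarith [mul_le_mul_of_nonneg_right hd3 hp0.le]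
  nlinarith

theorem upperTail_poly_large {p δ y : ℝ} (hp0 : 0 < p) (hp : p ≤ 1 / 2) (hδ0 : 0 < δ)
    (hδ : δ ≤ 1 / 2) (hy : y * (1 - p) = 3 / 2 * δ * p) :
    -(25 / 3) * δ ^ 2 * p ≤ -((1 + 2 * δ) * p * (3 / 2 * δ - 9 / 8 * δ ^ 2 + 9 / 8 * δ ^ 3)) +
      (1 - (1 + 2 * δ) * p) * (y + y ^ 2 / 2) := by
  have hy0 : 0 ≤ y := by nlinarith
  have hyub : y ≤ 3 / 2 * δ := by nlinarith
  have hexpand : (1 - (1 + 2 * δ) * p) * (y + y ^ 2 / 2) =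
      3 / 2 * δ * p - 5 / 4 * δ * p * y - δ * p * y ^ 2 := by
    linear_combination (1 + y / 2) * hy
  rw [hexpand]
  have hdp : 0 ≤ δ * p := by positivity
  have t1 : 5 / 4 * δ * p * y ≤ 15 / 8 * δ ^ 2 * p := by
    nlinarith [mul_le_mul_of_nonneg_left hyub hdp]
  have t2 : δ * p * y ^ 2 ≤ 9 / 4 * δ ^ 3 * p := by
    nlinarith [mul_le_mul_of_nonneg_left (by nlinarith : y ^ 2 ≤ 9 / 4 * δ ^ 2) hdp]
  have hd3 : δ ^ 3 ≤ 1 / 2 * δ ^ 2 := by nlinarith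
  have hd4 : δ ^ 4 ≤ 1 / 2 * δ ^ 3 := by nlinarith [mul_le_mul_of_nonneg_right hd3 hδ0.le]
  have t3 : 9 / 4 * δ ^ 4 * p ≤ 9 / 8 * δ ^ 3 * p := by
    nlinarith [mul_le_mul_of_nonneg_right hd4 hp0.le]
  have t4 : 27 / 8 * δ ^ 3 * p ≤ 27 / 16 * δ ^ 2 * p := by
    nlinarith [mul_le_mul_of_nonneg_right hd3 hp0.le]
  nlinarith

/- A shift of `2δp` loses too much rate when `δ` or `p` is large; the shift `3δp/2` keeps more of
it, but Chebyshev controls its narrower window only when `δ > 1/4` or `p > 2/5` (lower tail),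
resp. `p > 2/5` (upper tail). -/
theorem lowerTail_exp_le_of_small {p δ : ℝ} (hp0 : 0 < p) (hp : p ≤ 2 / 5) (hδ0 : 0 < δ)
    (hδ : δ ≤ 1 / 4) (hn : 3 ≤ δ ^ 2 * p * n) :
    exp (-9 * δ ^ 2 * p * n) ≤
      (bernoulliPi n p {x | numTrue x ≤ (1 - δ) * p * n}).toReal := by
  have hq : 0 < 1 - p := by linarith
  refine lowerTail_exp_le_of_window (r := (1 - 2 * δ) * p) (ρ := δ * p) (θ₀ := (1 - 3 * δ) * p)
    (s := 1 / 6) hp0 (by linarith) (by nlinarith) (by nlinarith) (by positivity) (by norm_num) hn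
    (by linarith) (by linarith) ?_ ?_
  · have hllr := logLikelihoodRatio_one_sub_mul_ge (u := 2 * δ) (θ := (1 - 3 * δ) * p) hp0 (by linarith)
      (by linarith) (by linarith) (by nlinarith) (by nlinarith)
    have hpoly := lowerTail_poly_small (x := 2 * δ * p / (1 - p)) hp0 hp hδ0 hδ (by field_simp)
    linarith
  · rw [show (1 - 2 * δ) * p * (1 - (1 - 2 * δ) * p) * (δ ^ 2 * p) / (3 * (δ * p) ^ 2) =
      (1 - 2 * δ) * (1 - (1 - 2 * δ) * p) / 3 by field_simp,
      show -3 * (1 / 6 : ℝ) = -(1 / 2) by norm_num]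
    have : (1 - 2 * δ) * (1 - (1 - 2 * δ) * p) ≤ 1 := by nlinarith
    linarith [exp_neg_half_le]

theorem lowerTail_exp_le_of_large {p δ : ℝ} (hp0 : 0 < p) (hp : p ≤ 1 / 2) (hδ0 : 0 < δ)
    (hδ : δ ≤ 1 / 2) (hlarge : 1 / 4 < δ ∨ 2 / 5 < p) (hn : 3 ≤ δ ^ 2 * p * n) :
    exp (-9 * δ ^ 2 * p * n) ≤
      (bernoulliPi n p {x | numTrue x ≤ (1 - δ) * p * n}).toReal := by
  have hq : 0 < 1 - p := by linarith
  refine lowerTail_exp_le_of_window (r := (1 - 3 / 2 * δ) * p) (ρ := δ * p / 2)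
    (θ₀ := (1 - 2 * δ) * p) (s := 2 / 3) hp0 (by linarith) (by nlinarith) (by nlinarith)
    (by positivity) (by norm_num) hn (by linarith) (by linarith) ?_ ?_
  · have hllr := logLikelihoodRatio_one_sub_mul_ge (u := 3 / 2 * δ) (θ := (1 - 2 * δ) * p) hp0
      (by linarith) (by linarith) (by linarith) (by nlinarith) (by nlinarith)
    have hpoly := lowerTail_poly_large (x := 3 / 2 * δ * p / (1 - p)) hp0 hp hδ0 hδ (by field_simp)
    linarith
  · rw [show (1 - 3 / 2 * δ) * p * (1 - (1 - 3 / 2 * δ) * p) * (δ ^ 2 * p) / (3 * (δ * p / 2) ^ 2) =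
      4 / 3 * ((1 - 3 / 2 * δ) * (1 - (1 - 3 / 2 * δ) * p)) by field_simp; ring,
      show -3 * (2 / 3 : ℝ) = -2 by norm_num]
    have : (1 - 3 / 2 * δ) * (1 - (1 - 3 / 2 * δ) * p) ≤ 5 / 8 := by
      rcases hlarge with h | h <;> nlinarith
    linarith [exp_neg_two_le]

theorem upperTail_exp_le_of_small {p δ : ℝ} (hp0 : 0 < p) (hp : p ≤ 2 / 5) (hδ0 : 0 < δ)
    (hδ : δ ≤ 1 / 2) (hn : 3 ≤ δ ^ 2 * p * n) :
    exp (-9 * δ ^ 2 * p * n) ≤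
      (bernoulliPi n p {x | numTrue x ≥ (1 + δ) * p * n}).toReal := by
  have hq : 0 < 1 - p := by linarith
  refine upperTail_exp_le_of_window (r := (1 + 2 * δ) * p) (ρ := δ * p) (θ₀ := (1 + 3 * δ) * p)
    (s := 2 / 3) hp0 (by linarith) (by nlinarith) (by nlinarith) (by positivity) (by norm_num) hn
    (by linarith) (by linarith) ?_ ?_
  · have hllr := logLikelihoodRatio_one_add_mul_ge (u := 2 * δ) (θ := (1 + 3 * δ) * p) hp0 (by linarith)
      (by linarith) (by nlinarith) (by positivity) (by nlinarith)
    have hpoly := upperTail_poly_small (y := 2 * δ * p / (1 - p)) hp0 hp hδ0 hδ (by field_simp)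
    linarith
  · rw [show (1 + 2 * δ) * p * (1 - (1 + 2 * δ) * p) * (δ ^ 2 * p) / (3 * (δ * p) ^ 2) =
      (1 + 2 * δ) * (1 - (1 + 2 * δ) * p) / 3 by field_simp, show -3 * (2 / 3 : ℝ) = -2 by norm_num]
    have : (1 + 2 * δ) * (1 - (1 + 2 * δ) * p) ≤ 2 := by nlinarith
    linarith [exp_neg_two_le]

theorem upperTail_exp_le_of_large {p δ : ℝ} (hp0 : 0 < p) (hp : p ≤ 1 / 2) (hδ0 : 0 < δ)
    (hδ : δ ≤ 1 / 2) (hlarge : 2 / 5 < p) (hn : 3 ≤ δ ^ 2 * p * n) :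
    exp (-9 * δ ^ 2 * p * n) ≤
      (bernoulliPi n p {x | numTrue x ≥ (1 + δ) * p * n}).toReal := by
  have hq : 0 < 1 - p := by linarith
  refine upperTail_exp_le_of_window (r := (1 + 3 / 2 * δ) * p) (ρ := δ * p / 2)
    (θ₀ := (1 + 2 * δ) * p) (s := 2 / 3) hp0 (by linarith) (by nlinarith) (by nlinarith)
    (by positivity) (by norm_num) hn (by linarith) (by linarith) ?_ ?_
  · have hllr := logLikelihoodRatio_one_add_mul_ge (u := 3 / 2 * δ) (θ := (1 + 2 * δ) * p) hp0
      (by linarith) (by linarith) (by nlinarith) (by positivity) (by nlinarith)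
    have hpoly := upperTail_poly_large (y := 3 / 2 * δ * p / (1 - p)) hp0 hp hδ0 hδ (by field_simp)
    linarith
  · rw [show (1 + 3 / 2 * δ) * p * (1 - (1 + 3 / 2 * δ) * p) * (δ ^ 2 * p) / (3 * (δ * p / 2) ^ 2) =
      4 / 3 * ((1 + 3 / 2 * δ) * (1 - (1 + 3 / 2 * δ) * p)) by field_simp; ring,
      show -3 * (2 / 3 : ℝ) = -2 by norm_num]
    have hvar : (1 + 3 / 2 * δ) * p * (1 - (1 + 3 / 2 * δ) * p) ≤ 1 / 4 := by
      nlinarith [sq_nonneg (2 * ((1 + 3 / 2 * δ) * p) - 1)]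
    have : (1 + 3 / 2 * δ) * (1 - (1 + 3 / 2 * δ) * p) ≤ 5 / 8 := by nlinarith
    linarith [exp_neg_two_le]

end Configurations

theorem stmt_16 (p δ : ℝ) (hp0 : 0 < p) (hp : p ≤ 1/2) (hδ0 : 0 < δ) (hδ : δ ≤ 1/2)
    (n : ℕ) (hn : (n : ℝ) ≥ 3 / (δ^2 * p)) :
    let ber : Measure Bool :=
      ENNReal.ofReal p • Measure.dirac true + ENNReal.ofReal (1 - p) • Measure.dirac false
    let μ := Measure.pi fun _ : Fin n => ber
    ((μ {x | (∑ i, if x i then (1:ℝ) else 0) ≤ (1 - δ) * p * n}).toReal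
        ≥ Real.exp (-9 * δ^2 * p * n)) ∧
    ((μ {x | (∑ i, if x i then (1:ℝ) else 0) ≥ (1 + δ) * p * n}).toReal
        ≥ Real.exp (-9 * δ^2 * p * n)) := by
  intro ber μ
  have hn3 : 3 ≤ δ ^ 2 * p * n := by
    rwa [ge_iff_le, div_le_iff₀ (by positivity), mul_comm] at hn
  refine ⟨?_, ?_⟩
  · by_cases hsmall : δ ≤ 1 / 4 ∧ p ≤ 2 / 5
    · exact lowerTail_exp_le_of_small hp0 hsmall.2 hδ0 hsmall.1 hn3
    · rw [not_and_or, not_le, not_le] at hsmall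
      exact lowerTail_exp_le_of_large hp0 hp hδ0 hδ hsmall hn3
  · rcases le_or_gt p (2 / 5) with hsmall | hlarge
    · exact upperTail_exp_le_of_small hp0 hsmall hδ0 hδ hn3
    · exact upperTail_exp_le_of_large hp0 hp hδ0 hδ hlarge hn3
end
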